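/- The lattice N constructed from the root lattice A_1^{24} and the extended binary Golay code is an even unimodular positive-definite lattice of rank 24. -/

import Mathlib

def indic (s : Finset ℕ) : Fin 24 → ZMod 2 := fun i => if (i : ℕ) + 1 ∈ s then 1 else 0

def golayBasisSets : Fin 12 → Finset ℕ :=
  ![{1,2,16,18,5,12,22,3}, {7,4,19,10,12,15,8,16}, {23,3,9,19,13,18,8,11},
    {6,3,22,4,21,17,15,9}, {20,10,11,17,14,13,22,12}, {24,2,10,19,9,5,14,21},
    {8,7,15,17,11,23,18,16}, {16,1,2,21,4,7,8,18}, {18,1,16,8,23,13,14,5},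
    {8,7,15,9,19,23,4,22,13,18,1,16}, {18,23,13,22,3,1,11,10,2,16,7,8},
    {16,1,2,10,12,7,5,9,15,8,23,18}]

def golayCode : Submodule (ZMod 2) (Fin 24 → ZMod 2) :=
  Submodule.span (ZMod 2) (Set.range fun i => indic (golayBasisSets i))

/-- The ambient 24-dimensional rational quadratic space. -/
abbrev V24 := Fin 24 → ℚ

/-- The bilinear form on `V24` for which the standard basis vectors have norm 2. -/
def B24 (u v : V24) : ℚ := 2 * ∑ i, u i * v i

/-- The generators `f_n` of the root sublattice `R` of type `A₁²⁴`. -/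
def f24 (n : Fin 24) : V24 := fun i => if i = n then 1 else 0

/-- The Niemeier lattice `N` of type `A₁²⁴`:
`N = { v ∈ (1/2)R : (v mod R) ∈ 𝒢₂₄ }`. -/
def NSet : Set V24 :=
  { v | ∃ w : Fin 24 → ℤ, (∀ i, v i = (w i : ℚ) / 2) ∧
      (fun i => ((w i : ZMod 2))) ∈ golayCode }

/-! The Golay code is self-orthogonal and doubly even. For `v = w/2` and `u = x/2` in `N` one has
`B(v, u) = (w ⬝ x)/2`, where `w ⬝ x` is even because it reduces to the dot product of two codewords,
and `w ⬝ w ≡ 0 mod 4` because `w ⬝ w mod 4` only depends on `w mod 2` and is additive on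
orthogonal codewords; so `N` is integral and even.
The generator matrix of the code has rank 12, so the code equals its dual. Pairing a vector of the
dual lattice of `N` with the `f_n` shows that it lies in `½R`, and pairing it with the halves of the
lifted generators shows that its residue is orthogonal to the code, hence in it. Finally
`R ≤ N ≤ ½R`, so `N` is free of rank 24 over the principal ideal domain `ℤ`. -/

open Matrix Module Submodule

section SelfDualCode

variable {R ι κ : Type*} [Fintype ι] [Fintype κ]

theorem Matrix.mulVec_eq_zero_of_mem_span_row [CommRing R] {G : Matrix κ ι R}
    (hG : G * Gᵀ = 0) {y : ι → R} (hy : y ∈ span R (Set.range G.row)) : G *ᵥ y = 0 := by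
  rw [← range_vecMulLinear] at hy
  obtain ⟨a, rfl⟩ := hy
  rw [vecMulLinear_apply, ← mulVec_transpose, mulVec_mulVec, hG, zero_mulVec]

theorem Matrix.dotProduct_eq_zero_of_mem_span_row [CommRing R] {G : Matrix κ ι R}
    (hG : G * Gᵀ = 0) {x y : ι → R} (hx : x ∈ span R (Set.range G.row))
    (hy : y ∈ span R (Set.range G.row)) : x ⬝ᵥ y = 0 := by
  rw [← range_vecMulLinear] at hx
  obtain ⟨a, rfl⟩ := hx
  rw [vecMulLinear_apply, ← dotProduct_mulVec, mulVec_eq_zero_of_mem_span_row hG hy,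
    dotProduct_zero]

theorem Matrix.mem_span_row_of_mulVec_eq_zero [Field R] {G : Matrix κ ι R}
    (hG : G * Gᵀ = 0) (hrank : 2 * G.rank = Fintype.card ι) {x : ι → R} (hx : G *ᵥ x = 0) :
    x ∈ span R (Set.range G.row) := by
  have hle : span R (Set.range G.row) ≤ LinearMap.ker G.mulVecLin := fun y hy =>
    mulVec_eq_zero_of_mem_span_row hG hy
  have hker := LinearMap.finrank_range_add_finrank_ker G.mulVecLin
  rw [← rank, finrank_fintype_fun_eq_card] at hker
  have heq := eq_of_le_of_finrank_eq hle (by rw [← rank_eq_finrank_span_row]; omega)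
  exact heq ▸ hx

end SelfDualCode

section BinaryCode

def ZMod.liftVec {ι : Type*} (c : ι → ZMod 2) : ι → ℤ := fun i => ((c i).val : ℤ)

theorem intCast_liftVec {ι : Type*} (c : ι → ZMod 2) :
    (fun i => (ZMod.liftVec c i : ZMod 2)) = c := by
  funext i; simp [ZMod.liftVec]

variable {ι κ : Type*} [Fintype ι] [Fintype κ]

theorem intCast_dotProduct (w w' : ι → ℤ) (n : ℕ) :
    ((w ⬝ᵥ w' : ℤ) : ZMod n) = (fun i => (w i : ZMod n)) ⬝ᵥ (fun i => (w' i : ZMod n)) := by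
  simp [dotProduct]

theorem two_dvd_dotProduct_of_orthogonal {C : Submodule (ZMod 2) (ι → ZMod 2)}
    (hC : ∀ x ∈ C, ∀ y ∈ C, x ⬝ᵥ y = 0) {w w' : ι → ℤ}
    (hw : (fun i => (w i : ZMod 2)) ∈ C) (hw' : (fun i => (w' i : ZMod 2)) ∈ C) :
    (2 : ℤ) ∣ w ⬝ᵥ w' := by
  have h := hC _ hw _ hw'
  rw [← intCast_dotProduct] at h
  exact_mod_cast (ZMod.intCast_zmod_eq_zero_iff_dvd _ 2).1 h

theorem four_dvd_dotProduct_self_sub_of_intCast_eq {w w' : ι → ℤ}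
    (h : (fun i => (w i : ZMod 2)) = fun i => (w' i : ZMod 2)) :
    (4 : ℤ) ∣ w' ⬝ᵥ w' - w ⬝ᵥ w := by
  rw [dotProduct, dotProduct, ← Finset.sum_sub_distrib]
  refine Finset.dvd_sum fun i _ => ?_
  obtain ⟨t, ht⟩ := (ZMod.intCast_eq_intCast_iff_dvd_sub (w i) (w' i) 2).1 (congrFun h i)
  push_cast at ht
  exact ⟨w i * t + t * t, by rw [show w' i = w i + 2 * t by linarith]; ring⟩

theorem four_dvd_dotProduct_self_of_mem_span_row {G : Matrix κ ι (ZMod 2)} (hG : G * Gᵀ = 0)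
    (hG4 : ∀ k, (4 : ℤ) ∣ ZMod.liftVec (G k) ⬝ᵥ ZMod.liftVec (G k)) {w : ι → ℤ}
    (hw : (fun i => (w i : ZMod 2)) ∈ span (ZMod 2) (Set.range G.row)) :
    (4 : ℤ) ∣ w ⬝ᵥ w := by
  have of_intCast_eq {w w' : ι → ℤ} (h : (fun i => (w i : ZMod 2)) = fun i => (w' i : ZMod 2))
      (h4 : (4 : ℤ) ∣ w ⬝ᵥ w) : (4 : ℤ) ∣ w' ⬝ᵥ w' :=
    (dvd_sub_left h4).mp (four_dvd_dotProduct_self_sub_of_intCast_eq h)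
  have zero_case (w : ι → ℤ) (h : (fun i => (w i : ZMod 2)) = 0) : (4 : ℤ) ∣ w ⬝ᵥ w :=
    of_intCast_eq (w := 0) (by simpa [funext_iff] using h.symm) (by simp)
  generalize hc : (fun i => (w i : ZMod 2)) = c at hw
  induction hw using Submodule.span_induction generalizing w with
  | mem c hc' =>
    obtain ⟨k, rfl⟩ := hc'
    exact of_intCast_eq ((intCast_liftVec _).trans hc.symm) (hG4 k)
  | zero => exact zero_case w hc
  | add c d hc' hd' ihc ihd =>
    set w₁ := ZMod.liftVec c
    have h₁ : (fun i => (w₁ i : ZMod 2)) = c := intCast_liftVec c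
    have h₂ : (fun i => ((w - w₁) i : ZMod 2)) = d := by
      funext i; have := congrFun hc i; have := congrFun h₁ i; simp_all
    have hsplit : w ⬝ᵥ w = w₁ ⬝ᵥ w₁ + 2 * (w₁ ⬝ᵥ (w - w₁)) + (w - w₁) ⬝ᵥ (w - w₁) := by
      simp only [dotProduct_sub, sub_dotProduct, dotProduct_comm w w₁]; ring
    have hcross := two_dvd_dotProduct_of_orthogonal
      (fun x hx y hy => dotProduct_eq_zero_of_mem_span_row hG hx hy) (h₁ ▸ hc') (h₂ ▸ hd')
    rw [hsplit]
    exact dvd_add (dvd_add (ihc h₁) (by simpa using mul_dvd_mul_left 2 hcross)) (ihd h₂)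
  | smul a c hc' ih =>
    obtain rfl | rfl := (by decide : ∀ b : ZMod 2, b = 0 ∨ b = 1) a
    · exact zero_case w (by simpa using hc)
    · exact ih (by simpa using hc)

end BinaryCode

def golayGenerator : Matrix (Fin 12) (Fin 24) (ZMod 2) :=
  Matrix.of fun k => indic (golayBasisSets k)

theorem golayGenerator_mul_transpose : golayGenerator * golayGeneratorᵀ = 0 := by
  decide

theorem four_dvd_liftVec_golayGenerator (k : Fin 12) :
    (4 : ℤ) ∣ ZMod.liftVec (golayGenerator k) ⬝ᵥ ZMod.liftVec (golayGenerator k) := by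
  revert k; decide

-- Found by Gaussian elimination: `golayReduction * golayGenerator` has the form `[1 | A]`.
def golayReduction : Matrix (Fin 12) (Fin 12) (ZMod 2) :=
  Matrix.of ![![1,0,1,0,0,1,1,1,1,1,0,1],
              ![1,1,0,0,1,0,0,0,0,1,1,1],
              ![1,1,0,0,0,1,0,0,0,1,0,0],
              ![0,1,0,0,1,0,1,0,0,0,0,0],
              ![1,0,1,0,1,1,0,0,1,0,0,0],
              ![0,1,0,1,0,1,1,1,0,1,1,1],
              ![0,0,1,0,1,1,1,1,0,1,1,1],
              ![0,0,0,0,1,0,1,1,1,1,0,1],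
              ![1,1,0,0,1,0,0,1,0,0,1,1],
              ![1,0,1,0,1,0,0,1,1,1,0,0],
              ![0,0,1,0,0,1,1,0,1,0,1,0],
              ![1,0,0,0,0,1,1,1,0,1,1,0]]

theorem golayReduction_mul_submatrix :
    (golayReduction * golayGenerator).submatrix id (Fin.castAdd 12) = 1 := by
  decide

theorem golayGenerator_rank : golayGenerator.rank = 12 := by
  refine le_antisymm (rank_le_card_height _) ?_
  calc 12 = (1 : Matrix (Fin 12) (Fin 12) (ZMod 2)).rank := by simp
    _ = ((golayReduction * golayGenerator).submatrix id (Fin.castAdd 12)).rank := by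
      rw [golayReduction_mul_submatrix]
    _ ≤ (golayReduction * golayGenerator).rank := rank_submatrix_le _ _ _
    _ ≤ golayGenerator.rank := rank_mul_le_right _ _

theorem dotProduct_eq_zero_of_mem_golayCode {x y : Fin 24 → ZMod 2} (hx : x ∈ golayCode)
    (hy : y ∈ golayCode) : x ⬝ᵥ y = 0 :=
  dotProduct_eq_zero_of_mem_span_row golayGenerator_mul_transpose hx hy

theorem mem_golayCode_of_mulVec_eq_zero {x : Fin 24 → ZMod 2} (hx : golayGenerator *ᵥ x = 0) :
    x ∈ golayCode :=
  mem_span_row_of_mulVec_eq_zero golayGenerator_mul_transpose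
    (by rw [golayGenerator_rank]; rfl) hx

theorem Submodule.nonempty_basis_of_le_span {R M ι : Type*} [CommRing R] [IsDomain R]
    [IsPrincipalIdealRing R] [AddCommGroup M] [Module R M] [Fintype ι] {b c : ι → M}
    (hb : LinearIndependent R b) (hc : LinearIndependent R c) {N : Submodule R M}
    (hcN : ∀ i, c i ∈ N) (hNb : N ≤ span R (Set.range b)) : Nonempty (Basis ι R N) := by
  obtain ⟨n, e⟩ := basisOfPidOfLESpan hb hNb
  have := Module.Finite.of_basis e
  have := Module.Finite.span_of_finite R (Set.finite_range b)
  have hc' : LinearIndependent R fun i => (⟨c i, hcN i⟩ : N) :=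
    LinearIndependent.of_comp N.subtype hc
  have hlow := hc'.fintype_card_le_finrank
  have hup : finrank R N ≤ Fintype.card ι :=
    (finrank_mono hNb).trans (finrank_span_eq_card hb).le
  rw [finrank_eq_card_basis e, Fintype.card_fin] at hlow hup
  exact ⟨e.reindex (Fintype.equivFinOfCardEq (le_antisymm hup hlow).symm).symm⟩

theorem B24_half_half (w x : Fin 24 → ℤ) :
    B24 (fun i => (w i : ℚ) / 2) (fun i => (x i : ℚ) / 2) = ((w ⬝ᵥ x : ℤ) : ℚ) / 2 := by
  simp only [B24, dotProduct, Int.cast_sum, Int.cast_mul, Finset.sum_div, Finset.mul_sum]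
  exact Finset.sum_congr rfl fun i _ => by ring

theorem B24_f24 (v : V24) (n : Fin 24) : B24 v (f24 n) = 2 * v n := by
  simp [B24, f24]

theorem f24_eq_single (n : Fin 24) : f24 n = Pi.single n 1 := by
  funext i; simp [f24, Pi.single_apply]

theorem f24_mem_NSet (n : Fin 24) : f24 n ∈ NSet := by
  refine ⟨fun i => if i = n then 2 else 0, fun i => by by_cases h : i = n <;> simp [f24, h], ?_⟩
  convert golayCode.zero_mem using 1
  funext i
  by_cases h : i = n <;> simp [h]
  rfl

theorem liftVec_half_mem_NSet {c : Fin 24 → ZMod 2} (hc : c ∈ golayCode) :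
    (fun i => (ZMod.liftVec c i : ℚ) / 2) ∈ NSet :=
  ⟨ZMod.liftVec c, fun _ => rfl, (intCast_liftVec c).symm ▸ hc⟩

def niemeierLattice : Submodule ℤ V24 where
  carrier := NSet
  add_mem' := by
    rintro _ _ ⟨w, hw, hwC⟩ ⟨x, hx, hxC⟩
    refine ⟨w + x, fun i => by simp [hw, hx, add_div], ?_⟩
    convert golayCode.add_mem hwC hxC using 1
    funext i; simp
  zero_mem' := ⟨0, by simp, by convert golayCode.zero_mem using 1; funext i; simp⟩
  smul_mem' := by
    rintro n _ ⟨w, hw, hwC⟩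
    refine ⟨n • w, fun i => by simp [hw, mul_div_assoc], ?_⟩
    convert golayCode.smul_mem (n : ZMod 2) hwC using 1
    funext i; simp

theorem niemeierLattice_le_span :
    niemeierLattice ≤ span ℤ (Set.range fun i : Fin 24 => Pi.single i (1 / 2 : ℚ)) := by
  rintro v ⟨w, hw, -⟩
  refine (mem_span_range_iff_exists_fun ℤ).2 ⟨w, funext fun i => ?_⟩
  rw [Finset.sum_apply, Finset.sum_eq_single i (fun j _ hj => by simp [hj.symm])
    (by simp), hw]
  simp [div_eq_mul_inv]

theorem linearIndependent_single_half :
    LinearIndependent ℤ fun i : Fin 24 => Pi.single i (1 / 2 : ℚ) :=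
  Pi.linearIndependent_single_of_ne_zero fun _ => by norm_num

theorem linearIndependent_f24 : LinearIndependent ℤ f24 := by
  simpa only [← f24_eq_single] using
    Pi.linearIndependent_single_of_ne_zero (R := ℤ) (ι := Fin 24) (v := fun _ => (1 : ℚ))
      fun _ => one_ne_zero

theorem nonempty_basis_niemeierLattice : Nonempty (Basis (Fin 24) ℤ niemeierLattice) :=
  nonempty_basis_of_le_span linearIndependent_single_half linearIndependent_f24
    f24_mem_NSet niemeierLattice_le_span

theorem exists_B24_self_eq_two_mul {v : V24} (hv : v ∈ NSet) : ∃ k : ℤ, B24 v v = 2 * k := by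
  obtain ⟨w, hw, hwC⟩ := hv
  obtain ⟨k, hk⟩ := four_dvd_dotProduct_self_of_mem_span_row golayGenerator_mul_transpose
    four_dvd_liftVec_golayGenerator hwC
  refine ⟨k, ?_⟩
  rw [show v = _ from funext hw, B24_half_half, hk]
  push_cast; ring

theorem exists_B24_eq_intCast {v u : V24} (hv : v ∈ NSet) (hu : u ∈ NSet) :
    ∃ k : ℤ, B24 v u = k := by
  obtain ⟨w, hw, hwC⟩ := hv
  obtain ⟨x, hx, hxC⟩ := hu
  obtain ⟨k, hk⟩ := two_dvd_dotProduct_of_orthogonal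
    (fun _ hx _ hy => dotProduct_eq_zero_of_mem_golayCode hx hy) hwC hxC
  refine ⟨k, ?_⟩
  rw [show v = _ from funext hw, show u = _ from funext hx, B24_half_half, hk]
  push_cast; ring

theorem mem_NSet_of_forall_B24_eq_intCast {v : V24}
    (hv : ∀ u ∈ NSet, ∃ k : ℤ, B24 v u = k) : v ∈ NSet := by
  have half_int (n : Fin 24) : ∃ t : ℤ, v n = t / 2 := by
    obtain ⟨t, ht⟩ := hv _ (f24_mem_NSet n)
    exact ⟨t, by rw [← ht, B24_f24]; ring⟩
  choose w hw using half_int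
  refine ⟨w, hw, mem_golayCode_of_mulVec_eq_zero (funext fun m => ?_)⟩
  obtain ⟨t, ht⟩ := hv _ (liftVec_half_mem_NSet (c := golayGenerator m) (subset_span ⟨m, rfl⟩))
  rw [show v = _ from funext hw, B24_half_half] at ht
  have hdvd : (2 : ℤ) ∣ w ⬝ᵥ ZMod.liftVec (golayGenerator m) := by
    refine ⟨t, ?_⟩
    rw [div_eq_iff two_ne_zero, mul_comm] at ht
    exact_mod_cast ht
  have h0 := (ZMod.intCast_zmod_eq_zero_iff_dvd _ 2).2 hdvd
  rw [intCast_dotProduct, intCast_liftVec, dotProduct_comm] at h0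
  exact h0

theorem B24_self_pos {v : V24} (hv : v ≠ 0) : 0 < B24 v v := by
  obtain ⟨i, hi⟩ := Function.ne_iff.1 hv
  have : 0 < ∑ j, v j * v j :=
    Finset.sum_pos' (fun j _ => mul_self_nonneg _) ⟨i, Finset.mem_univ _, mul_self_pos.2 hi⟩
  simp only [B24]; linarith

theorem niemeier_even_unimodular_posdef_rank24 :
    (∀ v ∈ NSet, ∃ k : ℤ, B24 v v = 2 * k) ∧
    (∀ v ∈ NSet, ∀ u ∈ NSet, ∃ k : ℤ, B24 v u = k) ∧
    (∀ v : V24, (∀ u ∈ NSet, ∃ k : ℤ, B24 v u = k) → v ∈ NSet) ∧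
    (∀ v ∈ NSet, v ≠ 0 → 0 < B24 v v) ∧
    (∃ b : Fin 24 → V24, NSet = { v | ∃ c : Fin 24 → ℤ, v = ∑ i, c i • b i }) := by
  obtain ⟨e⟩ := nonempty_basis_niemeierLattice
  exact ⟨fun _ => exists_B24_self_eq_two_mul, fun _ hv _ => exists_B24_eq_intCast hv,
    fun _ => mem_NSet_of_forall_B24_eq_intCast, fun _ _ => B24_self_pos,
    ⟨fun i => e i, Set.ext fun _ => e.mem_submodule_iff'⟩⟩
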